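/- If C is a countable family of nonempty subshifts over finite alphabets and each member X_i ⊆ A_i^ℤ satisfies |A_i| ≤ 2^{n_i} for some strictly increasing sequence (n_i), then there exist a single finite alphabet B, a subshift X ⊆ B^ℤ, and continuous shift-power-commuting surjections R_i : X → X_i such that {R_i(X) : i ∈ ℕ} = C. (Non-effective version of Theorem 4.) -/

import Mathlib

/-- The shift map on `A^ℤ`. -/
def shiftMap (A : Type*) : (ℤ → A) → (ℤ → A) := fun x i => x (i + 1)

/-!
Give each integer `t` the layer `v₂(3t + 1)`, which is finite because `3t + 1 ≠ 0`; layer `i` is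
a residue class modulo `2 ^ (i + 1)`, and the layers partition `ℤ`. A point `(y_i)` of `∏ X_i` is
written into one sequence over `Bool × Bool`: the first track carries the parity of the layer, the
second writes the binary codes of the symbols of `y_i` on layer `i`, one symbol per block of
length `m_i = 2 ^ (i + 1 + n_i)`. The layer parities seen in any window of length `2 m_i`
determine the position modulo `m_i`, so `y_i (s)` can be read off the window around `s m_i` by a
local rule; sampling that rule every `m_i` cells gives `R_i`, which commutes with the shifts by
construction. Take `Y` to be the closure of the shift orbits of all encodings; then `R_i Y = X_i`
because `X_i` is closed and shift invariant.
-/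

open Function Set

namespace SubshiftUniversality

section Shift

variable {β : Type*}

def shiftBy (k : ℤ) (x : ℤ → β) : ℤ → β := fun t => x (t + k)

@[simp]
lemma shiftBy_apply (k : ℤ) (x : ℤ → β) (t : ℤ) : shiftBy k x t = x (t + k) := rfl

lemma shiftBy_shiftBy (a b : ℤ) (x : ℤ → β) : shiftBy a (shiftBy b x) = shiftBy (a + b) x :=
  funext fun t => by simp only [shiftBy_apply, add_assoc]

lemma shiftBy_zero (x : ℤ → β) : shiftBy 0 x = x := funext fun t => by simp

lemma shiftMap_eq_shiftBy_one : shiftMap β = shiftBy 1 := rfl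

lemma shiftMap_iterate (m : ℕ) : (shiftMap β)^[m] = shiftBy m := by
  induction m with
  | zero => exact funext fun x => (shiftBy_zero x).symm
  | succ m ih =>
    funext x
    rw [iterate_succ_apply', ih, shiftMap_eq_shiftBy_one, shiftBy_shiftBy, add_comm]
    push_cast
    rfl

lemma shiftBy_mem_of_image_shiftMap_eq {X : Set (ℤ → β)} (hX : shiftMap β '' X = X) (k : ℤ)
    {x : ℤ → β} (hx : x ∈ X) : shiftBy k x ∈ X := by
  induction k using Int.induction_on with
  | zero => rwa [shiftBy_zero]
  | succ k ih =>
    rw [add_comm, ← shiftBy_shiftBy, ← shiftMap_eq_shiftBy_one, ← hX]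
    exact mem_image_of_mem _ ih
  | pred k ih =>
    rw [← hX] at ih
    obtain ⟨z, hz, hzx⟩ := ih
    rwa [sub_eq_add_neg, add_comm, ← shiftBy_shiftBy, ← hzx, shiftMap_eq_shiftBy_one,
      shiftBy_shiftBy, neg_add_cancel, shiftBy_zero]

def shiftOrbit (S : Set (ℤ → β)) : Set (ℤ → β) := ⋃ k : ℤ, shiftBy k '' S

lemma subset_shiftOrbit (S : Set (ℤ → β)) : S ⊆ shiftOrbit S :=
  fun x hx => mem_iUnion.2 ⟨0, x, hx, shiftBy_zero x⟩

lemma image_shiftBy_shiftOrbit (j : ℤ) (S : Set (ℤ → β)) :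
    shiftBy j '' shiftOrbit S = shiftOrbit S := by
  simp only [shiftOrbit, image_iUnion, image_image, shiftBy_shiftBy]
  exact (Equiv.addLeft j).surjective.iUnion_comp (fun k => shiftBy k '' S)

variable [TopologicalSpace β]

lemma continuous_shiftBy (k : ℤ) : Continuous (shiftBy (β := β) k) :=
  continuous_pi fun t => continuous_apply (t + k)

def shiftHomeomorph (k : ℤ) : (ℤ → β) ≃ₜ (ℤ → β) where
  toFun := shiftBy k
  invFun := shiftBy (-k)
  left_inv x := by rw [shiftBy_shiftBy, neg_add_cancel, shiftBy_zero]
  right_inv x := by rw [shiftBy_shiftBy, add_neg_cancel, shiftBy_zero]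
  continuous_toFun := continuous_shiftBy k
  continuous_invFun := continuous_shiftBy (-k)

lemma image_shiftMap_closure_shiftOrbit (S : Set (ℤ → β)) :
    shiftMap β '' closure (shiftOrbit S) = closure (shiftOrbit S) := by
  rw [shiftMap_eq_shiftBy_one]
  exact ((shiftHomeomorph 1).image_closure _).trans
    (congrArg closure (image_shiftBy_shiftOrbit 1 S))

end Shift

lemma continuous_of_dependsOn {ι B C : Type*} [TopologicalSpace B] [DiscreteTopology B]
    [TopologicalSpace C] [Nonempty C] {f : (ι → B) → C} {T : Set ι} (hf : DependsOn f T)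
    (hT : T.Finite) : Continuous f := by
  obtain ⟨g, rfl⟩ := dependsOn_iff_exists_comp.1 hf
  have : Finite T := hT.to_subtype
  exact continuous_of_discreteTopology.comp (continuous_pi fun t => continuous_apply t.1)

section Sample

variable {B C : Type*}

def sample (ρ : (ℤ → B) → C) (m : ℕ) (x : ℤ → B) : ℤ → C := fun s => ρ (shiftBy (m * s) x)

lemma sample_shiftMap_iterate (ρ : (ℤ → B) → C) (m : ℕ) (x : ℤ → B) :
    sample ρ m ((shiftMap B)^[m] x) = shiftMap C (sample ρ m x) := by
  funext s
  simp only [sample, shiftMap, shiftMap_iterate, shiftBy_shiftBy, mul_add, mul_one]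

lemma sample_shiftBy {ρ : (ℤ → B) → C} {m : ℕ} (hm : 0 < m) {x : ℤ → B} {z : ℤ → C}
    (hρ : ∀ k, ρ (shiftBy k x) = z (k / m)) (k : ℤ) :
    sample ρ m (shiftBy k x) = shiftBy (k / m) z := by
  funext s
  rw [sample, shiftBy_shiftBy, hρ, shiftBy_apply, add_comm, Int.add_mul_ediv_left _ _ (by omega),
    add_comm]

lemma continuous_sample [TopologicalSpace B] [DiscreteTopology B] [TopologicalSpace C]
    [Nonempty C] {ρ : (ℤ → B) → C} {T : Set ℤ} (hρ : DependsOn ρ T) (hT : T.Finite) (m : ℕ) :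
    Continuous (sample ρ m) :=
  continuous_pi fun _ => (continuous_of_dependsOn hρ hT).comp (continuous_shiftBy _)

end Sample

lemma image_sample_closure_shiftOrbit {ι B : Type*} [DecidableEq ι] [TopologicalSpace B]
    {A : ι → Type*} [∀ i, TopologicalSpace (A i)] {X : ∀ i, Set (ℤ → A i)}
    (hX : (univ.pi X).Nonempty) {i : ι} (hclosed : IsClosed (X i))
    (hinv : shiftMap (A i) '' X i = X i) {Φ : (∀ j, ℤ → A j) → ℤ → B}
    {ρ : (ℤ → B) → A i} {m : ℕ} (hm : 0 < m) (hcont : Continuous (sample ρ m))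
    (hdec : ∀ y ∈ univ.pi X, ∀ k, ρ (shiftBy k (Φ y)) = y i (k / m)) :
    sample ρ m '' closure (shiftOrbit (Φ '' univ.pi X)) = X i := by
  have horbit : sample ρ m '' shiftOrbit (Φ '' univ.pi X) ⊆ X i := by
    rintro _ ⟨_, hx, rfl⟩
    obtain ⟨k, _, ⟨y, hy, rfl⟩, rfl⟩ := mem_iUnion.1 hx
    rw [sample_shiftBy hm (hdec y hy)]
    exact shiftBy_mem_of_image_shiftMap_eq hinv _ (hy i (mem_univ i))
  refine (image_closure_subset_closure_image hcont).trans (closure_minimal horbit hclosed)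
    |>.antisymm fun x hx => ?_
  obtain ⟨y₀, hy₀⟩ := hX
  have hy : update y₀ i x ∈ univ.pi X := update_mem_pi_iff_of_mem hy₀ |>.2 fun _ => hx
  refine ⟨Φ (update y₀ i x), subset_closure (subset_shiftOrbit _ ⟨_, hy, rfl⟩), ?_⟩
  rw [← shiftBy_zero (Φ _), sample_shiftBy hm (hdec _ hy), Int.zero_ediv, shiftBy_zero, update_self]

def layer (t : ℤ) : ℕ := padicValInt 2 (3 * t + 1)

lemma two_pow_dvd_iff_le_padicValInt {z : ℤ} (hz : z ≠ 0) (j : ℕ) :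
    (2 : ℤ) ^ j ∣ z ↔ j ≤ padicValInt 2 z := by
  simpa [hz] using padicValInt_dvd_iff (p := 2) j z

lemma two_pow_dvd_iff_le_layer (t : ℤ) (j : ℕ) : (2 : ℤ) ^ j ∣ 3 * t + 1 ↔ j ≤ layer t :=
  two_pow_dvd_iff_le_padicValInt (by omega) j

lemma layer_eq_iff (t : ℤ) (j : ℕ) :
    layer t = j ↔ (2 : ℤ) ^ j ∣ 3 * t + 1 ∧ ¬(2 : ℤ) ^ (j + 1) ∣ 3 * t + 1 := by
  rw [two_pow_dvd_iff_le_layer, two_pow_dvd_iff_le_layer]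
  omega

lemma layer_eq_of_modEq {t t' : ℤ} (h : t ≡ t' [ZMOD 2 ^ (layer t + 1)]) : layer t' = layer t := by
  have key : ∀ j ≤ layer t + 1, j ≤ layer t' ↔ j ≤ layer t := fun j hj => by
    have hd : (2 : ℤ) ^ j ∣ 3 * (t' - t) := ((pow_dvd_pow 2 hj).trans h.dvd).mul_left 3
    rw [← two_pow_dvd_iff_le_layer, ← two_pow_dvd_iff_le_layer,
      show 3 * t' + 1 = 3 * t + 1 + 3 * (t' - t) by ring]
    exact dvd_add_left hd
  have h₁ := key (layer t) (by omega)
  have h₂ := key (layer t + 1) le_rfl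
  omega

lemma exists_layer_eq (j : ℕ) : ∃ t, layer t = j := by
  have h3 : (3 : ℤ) ∣ (-2) ^ j - 1 := by
    simpa using (Int.ModEq.pow j (show (-2 : ℤ) ≡ 1 [ZMOD 3] by decide)).symm.dvd
  -- the witness satisfies `3 t + 1 = (-2) ^ j`
  refine ⟨((-2) ^ j - 1) / 3, ?_⟩
  rw [layer, mul_comm, Int.ediv_mul_cancel h3, sub_add_cancel, padicValInt, Int.natAbs_pow]
  exact padicValNat.prime_pow j

lemma exists_mem_Ico_layer_eq (j : ℕ) (c : ℤ) : ∃ t ∈ Ico c (c + 2 ^ (j + 1)), layer t = j := by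
  obtain ⟨r, hr⟩ := exists_layer_eq j
  have hP : (0 : ℤ) < 2 ^ (j + 1) := by positivity
  refine ⟨c + (r - c) % 2 ^ (j + 1), ⟨?_, ?_⟩, ?_⟩
  · linarith [Int.emod_nonneg (r - c) hP.ne']
  · linarith [Int.emod_lt_of_pos (r - c) hP]
  · rw [← hr]
    apply layer_eq_of_modEq
    rw [hr]
    simpa using ((Int.mod_modEq (r - c) _).add_left c).symm

noncomputable def layerRep (i : ℕ) : ℤ := (exists_mem_Ico_layer_eq i 0).choose

lemma layerRep_mem_Ico (i : ℕ) : layerRep i ∈ Ico 0 (2 ^ (i + 1)) := by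
  unfold layerRep
  simpa using (exists_mem_Ico_layer_eq i 0).choose_spec.1

lemma layer_layerRep (i : ℕ) : layer (layerRep i) = i := (exists_mem_Ico_layer_eq i 0).choose_spec.2

lemma two_pow_dvd_sub_of_layer_bodd_eq {K : ℕ} {a b c : ℤ}
    (h : ∀ t ∈ Ico c (c + 2 ^ (K + 1)), (layer (t + a)).bodd = (layer (t + b)).bodd) :
    (2 : ℤ) ^ K ∣ a - b := by
  -- If `v₂(a - b) = j < K`, the window contains a `t` with `t + a` in layer `j + 1`;
  -- then `t + b` lies in layer `j`, of the other parity.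
  by_contra hab
  have hne : a - b ≠ 0 := fun h0 => hab (h0 ▸ dvd_zero _)
  set j := padicValInt 2 (a - b)
  have hjK : j < K := by
    by_contra hKj
    exact hab ((two_pow_dvd_iff_le_padicValInt hne K).2 (by omega))
  obtain ⟨t, ht, hlayer⟩ := exists_mem_Ico_layer_eq (j + 1) (c + a)
  have hlayer' : layer (t - a + b) = j := by
    have h3t : (2 : ℤ) ^ (j + 1) ∣ 3 * t + 1 := (two_pow_dvd_iff_le_layer t _).2 hlayer.ge
    have hj : (2 : ℤ) ^ j ∣ a - b := (two_pow_dvd_iff_le_padicValInt hne j).2 le_rfl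
    have hj1 : ¬(2 : ℤ) ^ (j + 1) ∣ a - b := mt (two_pow_dvd_iff_le_padicValInt hne _).1 (by omega)
    have hcop : IsCoprime ((2 : ℤ) ^ (j + 1)) 3 := (Int.isCoprime_iff_gcd_eq_one.2 rfl).pow_left
    rw [layer_eq_iff, show 3 * (t - a + b) + 1 = 3 * t + 1 - 3 * (a - b) by ring]
    refine ⟨dvd_sub ((pow_dvd_pow 2 j.le_succ).trans h3t) (hj.mul_left 3), fun h => hj1 ?_⟩
    exact hcop.dvd_of_dvd_mul_left ((dvd_sub_right h3t).1 h)
  have hwin : t - a ∈ Ico c (c + 2 ^ (K + 1)) := by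
    have : (2 : ℤ) ^ (j + 1 + 1) ≤ 2 ^ (K + 1) := pow_le_pow_right₀ (by norm_num) (by omega)
    constructor <;> linarith [ht.1, ht.2]
  have := h (t - a) hwin
  rw [sub_add_cancel, hlayer, hlayer'] at this
  simp at this

noncomputable def cellEquiv : Bool × Bool ≃ Fin 4 := Fintype.equivFinOfCardEq rfl

def IsPhase (M : ℕ) (x : ℤ → Fin 4) (k : ℤ) : Prop :=
  ∀ t ∈ Ico (-(M : ℤ)) M, (cellEquiv.symm (x t)).1 = (layer (t + k)).bodd

open Classical in
noncomputable def phase (M : ℕ) (x : ℤ → Fin 4) : ℤ :=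
  if h : ∃ k, IsPhase M x k then h.choose % M else 0

lemma phase_mem_Ico {M : ℕ} (hM : 0 < M) (x : ℤ → Fin 4) : phase M x ∈ Ico 0 (M : ℤ) := by
  unfold phase
  split_ifs
  · exact ⟨Int.emod_nonneg _ (by omega), Int.emod_lt_of_pos _ (by omega)⟩
  · exact ⟨le_rfl, by omega⟩

lemma phase_eq_emod {K : ℕ} {x : ℤ → Fin 4} {k : ℤ} (hk : IsPhase (2 ^ K) x k) :
    phase (2 ^ K) x = k % (2 ^ K : ℕ) := by
  have h : ∃ k, IsPhase (2 ^ K) x k := ⟨k, hk⟩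
  rw [phase, dif_pos h]
  push_cast
  refine Int.ModEq.eq <| Int.modEq_iff_dvd.2 <|
    two_pow_dvd_sub_of_layer_bodd_eq (c := -2 ^ K) fun t ht => ?_
  rw [pow_succ, mul_two, ← add_assoc, neg_add_cancel, zero_add] at ht
  have := h.choose_spec t (by exact_mod_cast ht)
  rw [← hk t (by exact_mod_cast ht), this]

section Coding

variable {A : ℕ → Type*} {n : ℕ → ℕ} (code : ∀ i, A i ↪ (Fin (n i) → Bool))

def blockLen (n : ℕ → ℕ) (i : ℕ) : ℕ := 2 ^ (i + 1 + n i)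

lemma blockLen_pos (n : ℕ → ℕ) (i : ℕ) : 0 < blockLen n i := Nat.two_pow_pos _

/-- Layer `i` is enumerated by `u ↦ layerRep i + 2 ^ (i + 1) * u`; its `u`-th cell carries bit
`u % 2 ^ n i` of the code of `y i (u / 2 ^ n i)`, or `false` when there is no such bit. -/
def layerBit (y : ∀ j, ℤ → A j) (i : ℕ) (u : ℤ) : Bool :=
  if h : (u % 2 ^ n i).toNat < n i then code i (y i (u / 2 ^ n i)) ⟨_, h⟩ else false

noncomputable def encode (y : ∀ j, ℤ → A j) (t : ℤ) : Fin 4 :=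
  cellEquiv ((layer t).bodd, layerBit code y (layer t) (t / 2 ^ (layer t + 1)))

noncomputable def decode [∀ i, Nonempty (A i)] (i : ℕ) (x : ℤ → Fin 4) : A i :=
  invFun (code i) fun p =>
    (cellEquiv.symm (x (layerRep i + 2 ^ (i + 1) * p - phase (blockLen n i) x))).2

lemma layerBit_block (y : ∀ j, ℤ → A j) (i : ℕ) (q : ℤ) (p : Fin (n i)) :
    layerBit code y i (2 ^ n i * q + p) = code i (y i q) p := by
  have hp : (p : ℤ) < 2 ^ n i := by exact_mod_cast p.2.trans Nat.lt_two_pow_self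
  have hmod : (2 ^ n i * q + p) % 2 ^ n i = p := by
    rw [Int.mul_add_emod_self_left, Int.emod_eq_of_lt (by positivity) hp]
  have hdiv : (2 ^ n i * q + p) / 2 ^ n i = q := by
    rw [add_comm, Int.add_mul_ediv_left _ _ (by positivity),
      Int.ediv_eq_zero_of_lt (by positivity) hp, zero_add]
  simp [layerBit, hmod, hdiv]

lemma layerRep_add_mem_Ico (i : ℕ) (p : Fin (n i)) :
    layerRep i + 2 ^ (i + 1) * p ∈ Ico 0 (blockLen n i : ℤ) := by
  have hp : (p : ℤ) + 1 ≤ 2 ^ n i := by exact_mod_cast p.2.trans Nat.lt_two_pow_self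
  obtain ⟨h₀, h₁⟩ := layerRep_mem_Ico i
  have hP : (0 : ℤ) < 2 ^ (i + 1) := by positivity
  refine ⟨by positivity, ?_⟩
  calc layerRep i + 2 ^ (i + 1) * p < 2 ^ (i + 1) * (p + 1) := by linarith
    _ ≤ 2 ^ (i + 1) * 2 ^ n i := by gcongr
    _ = blockLen n i := by simp [blockLen, pow_add]

lemma encode_block (y : ∀ j, ℤ → A j) (i : ℕ) (q : ℤ) (p : Fin (n i)) :
    encode code y (blockLen n i * q + (layerRep i + 2 ^ (i + 1) * p)) =
      cellEquiv (i.bodd, code i (y i q) p) := by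
  have hlen : (blockLen n i : ℤ) = 2 ^ (i + 1) * 2 ^ n i := by simp [blockLen, pow_add]
  have hlayer : layer (blockLen n i * q + (layerRep i + 2 ^ (i + 1) * p)) = i := by
    refine (layer_eq_of_modEq (Int.modEq_iff_dvd.2 ⟨2 ^ n i * q + p, ?_⟩)).trans (layer_layerRep i)
    rw [layer_layerRep, hlen]
    ring
  have hdiv : (blockLen n i * q + (layerRep i + 2 ^ (i + 1) * p)) / 2 ^ (i + 1) =
      2 ^ n i * q + p := by
    obtain ⟨h₀, h₁⟩ := layerRep_mem_Ico i
    rw [hlen, show 2 ^ (i + 1) * 2 ^ n i * q + (layerRep i + 2 ^ (i + 1) * p) =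
      layerRep i + 2 ^ (i + 1) * (2 ^ n i * q + p) by ring,
      Int.add_mul_ediv_left _ _ (by positivity), Int.ediv_eq_zero_of_lt h₀ h₁, zero_add]
  rw [encode, hlayer, hdiv, layerBit_block]

lemma isPhase_shiftBy_encode (M : ℕ) (y : ∀ j, ℤ → A j) (k : ℤ) :
    IsPhase M (shiftBy k (encode code y)) k :=
  fun t _ => by simp [encode]

variable [∀ i, Nonempty (A i)]

lemma decode_shiftBy_encode (y : ∀ j, ℤ → A j) (i : ℕ) (k : ℤ) :
    decode code i (shiftBy k (encode code y)) = y i (k / blockLen n i) := by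
  have hphase : phase (blockLen n i) (shiftBy k (encode code y)) = k % blockLen n i :=
    phase_eq_emod (K := i + 1 + n i) (isPhase_shiftBy_encode code _ y k)
  rw [decode, hphase, ← leftInverse_invFun (code i).injective (y i (k / blockLen n i))]
  congr 1
  funext p
  rw [shiftBy_apply, show layerRep i + 2 ^ (i + 1) * p - k % blockLen n i + k =
      blockLen n i * (k / blockLen n i) + (layerRep i + 2 ^ (i + 1) * p) by rw [Int.emod_def]; ring,
    encode_block, Equiv.symm_apply_apply]

lemma dependsOn_decode (i : ℕ) :
    DependsOn (decode code i) (Ico (-(blockLen n i : ℤ)) (blockLen n i)) := by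
  intro x x' hxx'
  have hphase : phase (blockLen n i) x = phase (blockLen n i) x' := by
    have : IsPhase (blockLen n i) x = IsPhase (blockLen n i) x' :=
      funext fun k => propext <| forall₂_congr fun t ht => by rw [hxx' t ht]
    rw [phase, phase, this]
  rw [decode, decode, hphase]
  congr 1
  funext p
  obtain ⟨h₀, h₁⟩ := layerRep_add_mem_Ico i p
  obtain ⟨h₂, h₃⟩ := phase_mem_Ico (blockLen_pos n i) x'
  rw [hxx' _ ⟨by linarith, by linarith⟩]

end Coding

lemma nonempty_embedding_of_natCard_le {α : Type*} [Finite α] {k : ℕ}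
    (h : Nat.card α ≤ 2 ^ k) : Nonempty (α ↪ (Fin k → Bool)) := by
  have := Fintype.ofFinite α
  exact Function.Embedding.nonempty_of_card_le (by simpa [Nat.card_eq_fintype_card] using h)

end SubshiftUniversality

open SubshiftUniversality in
theorem stmt17_general (A : ℕ → Type*) [∀ i, Finite (A i)]
    [∀ i, TopologicalSpace (A i)]
    (X : ∀ i, Set (ℤ → A i))
    (hne : ∀ i, (X i).Nonempty)
    (hclosed : ∀ i, IsClosed (X i))
    (hinv : ∀ i, shiftMap (A i) '' X i = X i)
    (n : ℕ → ℕ)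
    (hcard : ∀ i, Nat.card (A i) ≤ 2 ^ n i) :
    ∃ (N : ℕ) (Y : Set (ℤ → Fin N)),
      IsClosed Y ∧ shiftMap (Fin N) '' Y = Y ∧ Y.Nonempty ∧
      ∃ (m : ℕ → ℕ) (R : ∀ i, (ℤ → Fin N) → (ℤ → A i)),
        ∀ i, 1 ≤ m i ∧ Continuous (R i) ∧
          (∀ x ∈ Y, R i ((shiftMap (Fin N))^[m i] x) = shiftMap (A i) (R i x)) ∧
          R i '' Y = X i := by
  have : ∀ i, Nonempty (A i) := fun i => ⟨(hne i).some 0⟩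
  have code : ∀ i, A i ↪ (Fin (n i) → Bool) :=
    fun i => (nonempty_embedding_of_natCard_le (hcard i)).some
  have hX : (Set.univ.pi X).Nonempty := Set.univ_pi_nonempty_iff.2 hne
  have hcont : ∀ i, Continuous (sample (decode code i) (blockLen n i)) := fun i =>
    continuous_sample (dependsOn_decode code i) (Set.finite_Ico _ _) _
  refine ⟨4, closure (shiftOrbit (encode code '' Set.univ.pi X)), isClosed_closure,
    image_shiftMap_closure_shiftOrbit _,
    (hX.image _).mono ((subset_shiftOrbit _).trans subset_closure),
    blockLen n, fun i => sample (decode code i) (blockLen n i),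
    fun i => ⟨blockLen_pos n i, hcont i, fun x _ => sample_shiftMap_iterate _ _ x, ?_⟩⟩
  exact image_sample_closure_shiftOrbit hX (hclosed i) (hinv i) (blockLen_pos n i) (hcont i)
    fun y _ k => decode_shiftBy_encode code y i k

theorem stmt17 (A : ℕ → Type*) [∀ i, Finite (A i)]
    [∀ i, TopologicalSpace (A i)] [∀ i, DiscreteTopology (A i)]
    (X : ∀ i, Set (ℤ → A i))
    (hne : ∀ i, (X i).Nonempty)
    (hclosed : ∀ i, IsClosed (X i))
    (hinv : ∀ i, shiftMap (A i) '' X i = X i)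
    (n : ℕ → ℕ) (hn : StrictMono n)
    (hcard : ∀ i, Nat.card (A i) ≤ 2 ^ n i) :
    ∃ (N : ℕ) (Y : Set (ℤ → Fin N)),
      IsClosed Y ∧ shiftMap (Fin N) '' Y = Y ∧ Y.Nonempty ∧
      ∃ (m : ℕ → ℕ) (R : ∀ i, (ℤ → Fin N) → (ℤ → A i)),
        ∀ i, 1 ≤ m i ∧ Continuous (R i) ∧
          (∀ x ∈ Y, R i ((shiftMap (Fin N))^[m i] x) = shiftMap (A i) (R i x)) ∧
          R i '' Y = X i :=
  stmt17_general A X hne hclosed hinv n hcard
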